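/- arXiv:math/0301353 — 2 statements merged into one kernel-verified Lean document; each statement's English description precedes it below -/
import Mathlib

section
/- If the evaluation map α : P* ⊗_{End_R(P)} P → R is surjective, then it is an isomorphism of R-R bimodules. -/
/-!
STATEMENT 0: Existence of the tensor product of bimodules over noncommutative
rings, with its universal property.

A right `B`-action on `M` is encoded as a left action of `Bᵐᵒᵖ`.
-/

open MulOpposite

/-- `f : M → N → L` is `B`-balanced and `A`-`C` bilinear, where `M` is an
`A`-`B` bimodule, `N` is a `B`-`C` bimodule and `L` is an `A`-`C` bimodule. -/
structure IsBalancedBilinear (A B C : Type) [Ring A] [Ring B] [Ring C]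
    {M N L : Type} [AddCommGroup M] [Module A M] [Module Bᵐᵒᵖ M]
    [AddCommGroup N] [Module B N] [Module Cᵐᵒᵖ N]
    [AddCommGroup L] [Module A L] [Module Cᵐᵒᵖ L]
    (f : M → N → L) : Prop where
  add_left : ∀ m m' n, f (m + m') n = f m n + f m' n
  add_right : ∀ m n n', f m (n + n') = f m n + f m n'
  balanced : ∀ (b : B) m n, f (op b • m) n = f m (b • n)
  map_smul_left : ∀ (a : A) m n, f (a • m) n = a • f m n
  map_smul_right : ∀ (c : C) m n, f m (op c • n) = op c • f m n

/-- `α` is a homomorphism of `A`-`C` bimodules. -/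
def IsBimodHom (A C : Type) [Ring A] [Ring C] {P L : Type}
    [AddCommGroup P] [Module A P] [Module Cᵐᵒᵖ P]
    [AddCommGroup L] [Module A L] [Module Cᵐᵒᵖ L] (α : P → L) : Prop :=
  (∀ x y, α (x + y) = α x + α y) ∧
  (∀ (a : A) x, α (a • x) = a • α x) ∧
  (∀ (c : Cᵐᵒᵖ) x, α (c • x) = c • α x)

/-- A realization of the tensor product `M ⊗[B] N` of an `A`-`B` bimodule `M`
and a `B`-`C` bimodule `N`: an `A`-`C` bimodule `P` together with a
`B`-balanced `A`-`C` bilinear map `τ` which is universal among such maps. -/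
structure BimodTensorProduct (A B C : Type) [Ring A] [Ring B] [Ring C]
    (M N : Type) [AddCommGroup M] [Module A M] [Module Bᵐᵒᵖ M] [SMulCommClass A Bᵐᵒᵖ M]
    [AddCommGroup N] [Module B N] [Module Cᵐᵒᵖ N] [SMulCommClass B Cᵐᵒᵖ N] : Type 1 where
  P : Type
  [instAdd : AddCommGroup P]
  [instL : Module A P]
  [instR : Module Cᵐᵒᵖ P]
  [instComm : SMulCommClass A Cᵐᵒᵖ P]
  τ : M → N → P
  balanced_bilinear : IsBalancedBilinear A B C τ
  universal : ∀ (L : Type) [AddCommGroup L] [Module A L] [Module Cᵐᵒᵖ L]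
      [SMulCommClass A Cᵐᵒᵖ L] (φ : M → N → L), IsBalancedBilinear A B C φ →
      ∃! α : P → L, IsBimodHom A C α ∧ ∀ m n, φ m n = α (τ m n)

section Instances

variable (R : Type) [Ring R] (P : Type) [AddCommGroup P] [Module Rᵐᵒᵖ P]

/-- The right action of `E = End_R(P)` on `P* = Hom_R(P, R)` by precomposition,
encoded as a left `Eᵐᵒᵖ`-action. -/
instance instDualEndModule : Module (Module.End Rᵐᵒᵖ P)ᵐᵒᵖ (P →ₗ[Rᵐᵒᵖ] R) where
  smul g f := f.comp g.unop
  one_smul f := by ext p; rfl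
  mul_smul g h f := by ext p; rfl
  smul_zero g := by ext p; rfl
  smul_add g f₁ f₂ := by ext p; rfl
  add_smul g h f := by
    ext p
    show f ((g.unop + h.unop) p) = f (g.unop p) + f (h.unop p)
    rw [LinearMap.add_apply, map_add]
  zero_smul f := by
    ext p
    show f ((0 : Module.End Rᵐᵒᵖ P) p) = 0
    rw [LinearMap.zero_apply, map_zero]

instance instDualSMulComm :
    SMulCommClass R (Module.End Rᵐᵒᵖ P)ᵐᵒᵖ (P →ₗ[Rᵐᵒᵖ] R) :=
  ⟨fun _ _ _ => rfl⟩

end Instances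

/-!
The image of `α` lies in the trace ideal of `P`, so surjectivity gives `1 = ∑ gᵢ(qᵢ)` with
`gᵢ ∈ P*`, `qᵢ ∈ P`. Balancing through the rank-one endomorphisms `x ↦ q · f(x)` shows that
`t = ∑ gᵢ ⊗ qᵢ` satisfies `f ⊗ p = f(p) · t = t · f(p)`. Hence `t` is central, `x ↦ α(x) · t`
is a bimodule map agreeing with the identity on pure tensors, and so `α` has the left inverse
`r ↦ r · t`.
-/

attribute [local instance] BimodTensorProduct.instAdd BimodTensorProduct.instL
  BimodTensorProduct.instR BimodTensorProduct.instComm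

section Bimodule

variable {A B C : Type} [Ring A] [Ring B] [Ring C]

theorem IsBimodHom.id {P : Type} [AddCommGroup P] [Module A P] [Module Cᵐᵒᵖ P] :
    IsBimodHom A C (fun x : P => x) :=
  ⟨fun _ _ => rfl, fun _ _ => rfl, fun _ _ => rfl⟩

variable {P L L' : Type} [AddCommGroup P] [Module A P] [Module Cᵐᵒᵖ P]
  [AddCommGroup L] [Module A L] [Module Cᵐᵒᵖ L] [AddCommGroup L'] [Module A L'] [Module Cᵐᵒᵖ L']

theorem IsBimodHom.comp {β : L → L'} {α : P → L} (hβ : IsBimodHom A C β)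
    (hα : IsBimodHom A C α) : IsBimodHom A C (fun x => β (α x)) :=
  ⟨fun x y => (congrArg β (hα.1 x y)).trans (hβ.1 _ _),
    fun a x => (congrArg β (hα.2.1 a x)).trans (hβ.2.1 _ _),
    fun c x => (congrArg β (hα.2.2 c x)).trans (hβ.2.2 _ _)⟩

variable {M N : Type} [AddCommGroup M] [Module A M] [Module Bᵐᵒᵖ M]
  [AddCommGroup N] [Module B N] [Module Cᵐᵒᵖ N]

theorem IsBalancedBilinear.comp {f : M → N → L} {β : L → L'}
    (hf : IsBalancedBilinear A B C f) (hβ : IsBimodHom A C β) :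
    IsBalancedBilinear A B C (fun m n => β (f m n)) where
  add_left m m' n := by rw [hf.add_left, hβ.1]
  add_right m n n' := by rw [hf.add_right, hβ.1]
  balanced b m n := by rw [hf.balanced]
  map_smul_left a m n := by rw [hf.map_smul_left, hβ.2.1]
  map_smul_right c m n := by rw [hf.map_smul_right, hβ.2.2]

theorem IsBalancedBilinear.of_comp_injective {f : M → N → L} {β : L → L'}
    (hβ : IsBimodHom A C β) (hinj : Function.Injective β)
    (hf : IsBalancedBilinear A B C (fun m n => β (f m n))) : IsBalancedBilinear A B C f where
  add_left m m' n := hinj (by rw [hβ.1]; exact hf.add_left m m' n)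
  add_right m n n' := hinj (by rw [hβ.1]; exact hf.add_right m n n')
  balanced b m n := hinj (hf.balanced b m n)
  map_smul_left a m n := hinj (by rw [hβ.2.1]; exact hf.map_smul_left a m n)
  map_smul_right c m n := hinj (by rw [hβ.2.2]; exact hf.map_smul_right c m n)

end Bimodule

theorem TwoSidedIdeal.isBimodHom_subtype {R : Type} [Ring R] (I : TwoSidedIdeal R) :
    IsBimodHom R R (Subtype.val : I → R) :=
  ⟨fun _ _ => rfl, fun _ _ => rfl, fun _ _ => rfl⟩

theorem isBimodHom_smul_const {R L : Type} [Ring R] [AddCommGroup L] [Module R L]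
    [Module Rᵐᵒᵖ L] [SMulCommClass R Rᵐᵒᵖ L] {t : L} (ht : ∀ r : R, r • t = op r • t) :
    IsBimodHom R R (fun r : R => r • t) := by
  refine ⟨fun r s => add_smul r s t, fun a r => mul_smul a r t, fun c r => ?_⟩
  calc (c • r) • t = r • c.unop • t := by rw [← op_unop c, op_smul_eq_mul, mul_smul, unop_op]
    _ = c • r • t := by rw [ht, op_unop, smul_comm]

namespace BimodTensorProduct

section

variable {A B C : Type} [Ring A] [Ring B] [Ring C]
  {M N : Type} [AddCommGroup M] [Module A M] [Module Bᵐᵒᵖ M] [SMulCommClass A Bᵐᵒᵖ M]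
  [AddCommGroup N] [Module B N] [Module Cᵐᵒᵖ N] [SMulCommClass B Cᵐᵒᵖ N]
  (Tp : BimodTensorProduct A B C M N)

theorem hom_ext {L : Type} [AddCommGroup L] [Module A L] [Module Cᵐᵒᵖ L] [SMulCommClass A Cᵐᵒᵖ L]
    {β γ : Tp.P → L} (hβ : IsBimodHom A C β) (hγ : IsBimodHom A C γ)
    (h : ∀ m n, β (Tp.τ m n) = γ (Tp.τ m n)) : β = γ :=
  (Tp.universal L _ (Tp.balanced_bilinear.comp hβ)).unique ⟨hβ, fun _ _ => rfl⟩ ⟨hγ, h⟩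

end

theorem apply_mem_of_forall_τ_mem {R B : Type} [Ring R] [Ring B] {M N : Type} [AddCommGroup M]
    [Module R M] [Module Bᵐᵒᵖ M] [SMulCommClass R Bᵐᵒᵖ M] [AddCommGroup N] [Module B N]
    [Module Rᵐᵒᵖ N] [SMulCommClass B Rᵐᵒᵖ N] (Tp : BimodTensorProduct R B R M N) {α : Tp.P → R}
    (hα : IsBimodHom R R α) (I : TwoSidedIdeal R) (h : ∀ m n, α (Tp.τ m n) ∈ I) (x : Tp.P) :
    α x ∈ I := by
  have hφ : IsBalancedBilinear R B R (fun m n => (⟨α (Tp.τ m n), h m n⟩ : I)) :=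
    .of_comp_injective I.isBimodHom_subtype Subtype.val_injective
      (Tp.balanced_bilinear.comp hα)
  obtain ⟨β, ⟨hβ, hβτ⟩, -⟩ := Tp.universal I _ hφ
  have hαβ : α = fun x => (β x : R) :=
    Tp.hom_ext hα (I.isBimodHom_subtype.comp hβ) fun m n => by rw [← hβτ]
  rw [hαβ]
  exact (β x).2

end BimodTensorProduct

section Dual

variable (R : Type) [Ring R] (P : Type) [AddCommGroup P] [Module Rᵐᵒᵖ P]

def dualEvalSet : Set R := {r | ∃ (f : P →ₗ[Rᵐᵒᵖ] R) (p : P), f p = r}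

def traceIdeal : TwoSidedIdeal R := .span (dualEvalSet R P)

variable {R P}

theorem mem_traceIdeal_iff_mem_closure {r : R} :
    r ∈ traceIdeal R P ↔ r ∈ AddSubgroup.closure (dualEvalSet R P) :=
  TwoSidedIdeal.mem_span_iff_mem_addSubgroup_closure_absorbing
    (by rintro a _ ⟨f, p, rfl⟩; exact ⟨a • f, p, rfl⟩)
    (by rintro _ b ⟨f, p, rfl⟩; exact ⟨f, op b • p, by rw [map_smul, op_smul_eq_mul]⟩)

def dualRankOne (f : P →ₗ[Rᵐᵒᵖ] R) (q : P) : Module.End Rᵐᵒᵖ P where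
  toFun x := op (f x) • q
  map_add' x y := by rw [map_add, op_add, add_smul]
  map_smul' r x := by
    rw [map_smul, RingHom.id_apply, ← mul_smul, ← op_unop r, op_smul_eq_mul, op_mul, op_unop]

theorem op_dualRankOne_smul (f g : P →ₗ[Rᵐᵒᵖ] R) (q : P) :
    op (dualRankOne f q) • g = g q • f := by
  ext x
  show g (op (f x) • q) = g q * f x
  rw [map_smul, op_smul_eq_mul]

end Dual

namespace BimodTensorProduct

variable {R P : Type} [Ring R] [AddCommGroup P] [Module Rᵐᵒᵖ P]
  (Tp : BimodTensorProduct R (Module.End Rᵐᵒᵖ P) R (P →ₗ[Rᵐᵒᵖ] R) P)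

theorem τ_eval_smul_left (f g : P →ₗ[Rᵐᵒᵖ] R) (p q : P) :
    Tp.τ (g q • f) p = Tp.τ g (op (f p) • q) := by
  rw [← op_dualRankOne_smul, Tp.balanced_bilinear.balanced]
  rfl

theorem exists_τ_eq_smul (h1 : (1 : R) ∈ AddSubgroup.closure (dualEvalSet R P)) :
    ∃ t : Tp.P, ∀ f p, Tp.τ f p = op (f p) • t ∧ Tp.τ f p = f p • t := by
  have hτ := Tp.balanced_bilinear
  let τl (p : P) : (P →ₗ[Rᵐᵒᵖ] R) →+ Tp.P := AddMonoidHom.mk' (Tp.τ · p) (hτ.add_left · · p)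
  -- `t` stands for `∑ gᵢ ⊗ qᵢ` whenever `r = ∑ gᵢ(qᵢ)`
  suffices ∀ r ∈ AddSubgroup.closure (dualEvalSet R P), ∃ t : Tp.P,
      ∀ f p, Tp.τ (r • f) p = op (f p) • t ∧ op r • Tp.τ f p = f p • t by
    obtain ⟨t, ht⟩ := this 1 h1
    exact ⟨t, fun f p => by simpa only [one_smul, op_one] using ht f p⟩
  intro r hr
  induction hr using AddSubgroup.closure_induction with
  | mem r hr =>
    obtain ⟨g, q, rfl⟩ := hr
    refine ⟨Tp.τ g q, fun f p => ⟨?_, ?_⟩⟩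
    · rw [τ_eval_smul_left, hτ.map_smul_right]
    · rw [← hτ.map_smul_right, ← τ_eval_smul_left, hτ.map_smul_left]
  | zero =>
    exact ⟨0, fun f p => ⟨by rw [zero_smul, smul_zero]; exact (τl p).map_zero, by
      rw [op_zero, zero_smul, smul_zero]⟩⟩
  | add r s _ _ hr hs =>
    obtain ⟨t, ht⟩ := hr
    obtain ⟨u, hu⟩ := hs
    refine ⟨t + u, fun f p => ⟨?_, ?_⟩⟩
    · rw [add_smul, hτ.add_left, (ht f p).1, (hu f p).1, smul_add]
    · rw [op_add, add_smul, (ht f p).2, (hu f p).2, smul_add]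
  | neg r _ hr =>
    obtain ⟨t, ht⟩ := hr
    refine ⟨-t, fun f p => ⟨?_, ?_⟩⟩
    · rw [neg_smul r f, smul_neg, ← (ht f p).1]; exact (τl p).map_neg _
    · rw [op_neg, neg_smul, (ht f p).2, smul_neg]

theorem smul_eq_op_smul_of_mem_closure {t : Tp.P}
    (ht : ∀ f p, Tp.τ f p = op (f p) • t ∧ Tp.τ f p = f p • t) {r : R}
    (hr : r ∈ AddSubgroup.closure (dualEvalSet R P)) : r • t = op r • t := by
  induction hr using AddSubgroup.closure_induction with
  | mem r hr =>
    obtain ⟨f, p, rfl⟩ := hr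
    rw [← (ht f p).1, ← (ht f p).2]
  | zero => rw [zero_smul, op_zero, zero_smul]
  | add r s _ _ hr hs => rw [add_smul, hr, hs, op_add, add_smul]
  | neg r _ hr => rw [neg_smul, hr, op_neg, neg_smul]

end BimodTensorProduct

/-- If the evaluation map `α : P* ⊗[End_R(P)] P → R` is
surjective, then it is an isomorphism of `R`-`R` bimodules (being an `R`-`R`
bimodule homomorphism, it is in addition bijective). -/
theorem evaluation_surjective_bijective (R : Type) [Ring R] (P : Type)
    [AddCommGroup P] [Module Rᵐᵒᵖ P]
    (Tp : BimodTensorProduct R (Module.End Rᵐᵒᵖ P) R (P →ₗ[Rᵐᵒᵖ] R) P)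
    (α : Tp.P → R)
    (hα : letI := Tp.instAdd; letI := Tp.instL; letI := Tp.instR; letI := Tp.instComm
      IsBimodHom R R α ∧ ∀ (f : P →ₗ[Rᵐᵒᵖ] R) (p : P), α (Tp.τ f p) = f p)
    (hsurj : Function.Surjective α) :
    Function.Bijective α := by
  obtain ⟨hαhom, hατ⟩ := hα
  have hrange : ∀ x, α x ∈ traceIdeal R P := Tp.apply_mem_of_forall_τ_mem hαhom _ fun f p =>
    hατ f p ▸ TwoSidedIdeal.subset_span ⟨f, p, rfl⟩
  have htrace (r : R) : r ∈ AddSubgroup.closure (dualEvalSet R P) := by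
    obtain ⟨x, rfl⟩ := hsurj r
    exact mem_traceIdeal_iff_mem_closure.1 (hrange x)
  obtain ⟨t, ht⟩ := Tp.exists_τ_eq_smul (htrace 1)
  have hcentral (r : R) : r • t = op r • t := Tp.smul_eq_op_smul_of_mem_closure ht (htrace r)
  have hinv : Function.LeftInverse (· • t) α := congrFun <|
    Tp.hom_ext ((isBimodHom_smul_const hcentral).comp hαhom) IsBimodHom.id fun f p => by
      rw [hατ]; exact (ht f p).2.symm
  exact ⟨hinv.injective, hsurj⟩
end

section
/- If the map β : P ⊗_R P* → End_R(P) is surjective, then it is an isomorphism of End_R(P)-End_R(P) bimodules. -/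
/-!
STATEMENT 0: Existence of the tensor product of bimodules over noncommutative
rings, with its universal property.

A right `B`-action on `M` is encoded as a left action of `Bᵐᵒᵖ`.
-/

open MulOpposite

/-!
The image of `τ` generates `P ⊗ P*` additively: the subgroup it generates is itself a bimodule
through which `τ` factors, so by uniqueness in the universal property it is everything.
On generators one computes `β(p ⊗ f) · (q ⊗ g) = p ⊗ f(q) g = (p ⊗ f) · β(q ⊗ g)`, hence
`β x · y = x · β y` for all `x, y`. If `β e = 1` and `β z = 0`, then `z = z · β e = β z · e = 0`.
-/

attribute [local instance] BimodTensorProduct.instAdd BimodTensorProduct.instL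
  BimodTensorProduct.instR BimodTensorProduct.instComm

namespace BimodTensorProduct

section Generation

variable {A B C M N : Type} [Ring A] [Ring B] [Ring C]
  [AddCommGroup M] [Module A M] [Module Bᵐᵒᵖ M] [SMulCommClass A Bᵐᵒᵖ M]
  [AddCommGroup N] [Module B N] [Module Cᵐᵒᵖ N] [SMulCommClass B Cᵐᵒᵖ N]
  (T : BimodTensorProduct A B C M N)

def τClosure : AddSubgroup T.P :=
  AddSubgroup.closure (Set.range fun mn : M × N => T.τ mn.1 mn.2)

theorem τ_mem_τClosure (m : M) (n : N) : T.τ m n ∈ T.τClosure :=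
  AddSubgroup.subset_closure ⟨(m, n), rfl⟩

theorem τClosure_le_comap {f : T.P →+ T.P} (hf : ∀ m n, f (T.τ m n) ∈ T.τClosure) :
    T.τClosure ≤ T.τClosure.comap f :=
  AddSubgroup.closure_le _ |>.2 <| Set.range_subset_iff.2 fun mn => hf mn.1 mn.2

theorem smul_mem_τClosure (a : A) {x : T.P} (hx : x ∈ T.τClosure) : a • x ∈ T.τClosure :=
  T.τClosure_le_comap (f := DistribSMul.toAddMonoidHom T.P a)
    (fun m n => by
      rw [DistribSMul.toAddMonoidHom_apply, ← T.balanced_bilinear.map_smul_left]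
      exact T.τ_mem_τClosure _ _) hx

theorem op_smul_mem_τClosure (c : Cᵐᵒᵖ) {x : T.P} (hx : x ∈ T.τClosure) : c • x ∈ T.τClosure :=
  T.τClosure_le_comap (f := DistribSMul.toAddMonoidHom T.P c)
    (fun m n => by
      rw [DistribSMul.toAddMonoidHom_apply, ← op_unop c, ← T.balanced_bilinear.map_smul_right]
      exact T.τ_mem_τClosure _ _) hx

instance : SMul A T.τClosure := ⟨fun a x => ⟨a • (x : T.P), T.smul_mem_τClosure a x.2⟩⟩

instance : SMul Cᵐᵒᵖ T.τClosure := ⟨fun c x => ⟨c • (x : T.P), T.op_smul_mem_τClosure c x.2⟩⟩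

instance : Module A T.τClosure :=
  Subtype.coe_injective.module _ T.τClosure.subtype fun _ _ => rfl

instance : Module Cᵐᵒᵖ T.τClosure :=
  Subtype.coe_injective.module _ T.τClosure.subtype fun _ _ => rfl

instance : SMulCommClass A Cᵐᵒᵖ T.τClosure :=
  ⟨fun a c x => Subtype.ext (smul_comm a c (x : T.P))⟩

theorem isBalancedBilinear_codRestrict :
    IsBalancedBilinear A B C fun m n => (⟨T.τ m n, T.τ_mem_τClosure m n⟩ : T.τClosure) :=
  have h := T.balanced_bilinear
  ⟨fun _ _ _ => Subtype.ext (h.add_left _ _ _), fun _ _ _ => Subtype.ext (h.add_right _ _ _),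
    fun _ _ _ => Subtype.ext (h.balanced _ _ _), fun _ _ _ => Subtype.ext (h.map_smul_left _ _ _),
    fun _ _ _ => Subtype.ext (h.map_smul_right _ _ _)⟩

theorem τClosure_eq_top : T.τClosure = ⊤ := by
  obtain ⟨α, ⟨⟨hadd, hsmul, hsmul_op⟩, hατ⟩, -⟩ :=
    T.universal T.τClosure _ T.isBalancedBilinear_codRestrict
  have hα : (fun x => (α x : T.P)) = fun x => x :=
    (T.universal T.P T.τ T.balanced_bilinear).unique
      ⟨⟨fun x y => congrArg Subtype.val (hadd x y), fun a x => congrArg Subtype.val (hsmul a x),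
        fun c x => congrArg Subtype.val (hsmul_op c x)⟩,
        fun m n => congrArg Subtype.val (hατ m n)⟩
      ⟨⟨fun _ _ => rfl, fun _ _ => rfl, fun _ _ => rfl⟩, fun _ _ => rfl⟩
  exact eq_top_iff.2 fun x _ => (congrFun hα x : (α x : T.P) = x) ▸ (α x).2

theorem addMonoidHom_ext {L : Type} [AddCommGroup L] {f g : T.P →+ L}
    (h : ∀ m n, f (T.τ m n) = g (T.τ m n)) : f = g :=
  AddMonoidHom.eq_of_eqOn_dense T.τClosure_eq_top <| by
    rintro _ ⟨⟨m, n⟩, rfl⟩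
    exact h m n

theorem addMonoidHom_ext₂ {L : Type} [AddCommGroup L] {f g : T.P →+ T.P →+ L}
    (h : ∀ m n m' n', f (T.τ m n) (T.τ m' n') = g (T.τ m n) (T.τ m' n')) : f = g :=
  T.addMonoidHom_ext fun m n => T.addMonoidHom_ext (h m n)

end Generation

section Endomorphisms

variable {R P : Type} [Ring R] [AddCommGroup P] [Module Rᵐᵒᵖ P]
  (T : BimodTensorProduct (Module.End Rᵐᵒᵖ P) R (Module.End Rᵐᵒᵖ P) P (P →ₗ[Rᵐᵒᵖ] R))
  {β : T.P →+ Module.End Rᵐᵒᵖ P} (hβ : ∀ p f p', β (T.τ p f) p' = op (f p') • p)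
include hβ

theorem smul_eq_op_smul (x y : T.P) : β x • y = op (β y) • x := by
  have h := T.balanced_bilinear
  have on_generators p f q g : β (T.τ p f) • T.τ q g = op (β (T.τ q g)) • T.τ p f :=
    calc β (T.τ p f) • T.τ q g = T.τ p (f q • g) := by
          rw [← h.map_smul_left, Module.End.smul_def, hβ, h.balanced]
      _ = op (β (T.τ q g)) • T.τ p f := by
          rw [← h.map_smul_right]
          congr 1
          ext p'
          change f q * g p' = f (β (T.τ q g) p')
          rw [hβ, map_smul, op_smul_eq_mul]
  have := T.addMonoidHom_ext₂ (f := (smulAddHom _ T.P).comp β)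
    (g := ((smulAddHom (Module.End Rᵐᵒᵖ P)ᵐᵒᵖ T.P).comp
      ((opAddEquiv (α := Module.End Rᵐᵒᵖ P)).toAddMonoidHom.comp β)).flip) on_generators
  exact DFunLike.congr_fun (DFunLike.congr_fun this x) y

theorem injective_of_one_mem_range (h : 1 ∈ Set.range β) : Function.Injective β := by
  obtain ⟨e, he⟩ := h
  refine (injective_iff_map_eq_zero β).2 fun z hz => ?_
  calc z = op (β e) • z := by rw [he, op_one, one_smul]
    _ = β z • e := (T.smul_eq_op_smul hβ z e).symm
    _ = 0 := by rw [hz, zero_smul]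

end Endomorphisms

end BimodTensorProduct

/-- If the map `β : P ⊗[R] P* → End_R(P)` is surjective, then
it is an isomorphism of `End_R(P)`-`End_R(P)` bimodules (being an `E`-`E`
bimodule homomorphism, it is in addition bijective). -/
theorem beta_surjective_bijective (R : Type) [Ring R] (P : Type)
    [AddCommGroup P] [Module Rᵐᵒᵖ P]
    (Tp : BimodTensorProduct (Module.End Rᵐᵒᵖ P) R (Module.End Rᵐᵒᵖ P)
      P (P →ₗ[Rᵐᵒᵖ] R))
    (β : Tp.P → Module.End Rᵐᵒᵖ P)
    (hβ : letI := Tp.instAdd; letI := Tp.instL; letI := Tp.instR; letI := Tp.instComm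
      IsBimodHom (Module.End Rᵐᵒᵖ P) (Module.End Rᵐᵒᵖ P) β ∧
      ∀ (p : P) (f : P →ₗ[Rᵐᵒᵖ] R) (p' : P), β (Tp.τ p f) p' = op (f p') • p)
    (hsurj : Function.Surjective β) :
    Function.Bijective β := by
  obtain ⟨⟨hadd, -, -⟩, hτ⟩ := hβ
  exact ⟨Tp.injective_of_one_mem_range (β := AddMonoidHom.mk' β hadd) hτ (hsurj 1), hsurj⟩
end
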